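/- Let p be a prime, α > β ≥ γ > σ ≥ 0 with α − β = γ − σ, and let G = ⟨a, b ∣ [a,b]^{p^γ} = a^{p^α} = [a,b,b] = [a,b,a] = 1, b^{p^β} = [a,b]^{p^σ}⟩. For M = ⟨a^{p^β}, b^{p^β}⟩, the quotient G/M is isomorphic to ⟨x, y ∣ x^{p^β} = y^{p^β} = [x,y]^{p^σ} = [x,y,x] = [x,y,y] = 1⟩. -/

import Mathlib

/-- The commutator `[x,y] = x⁻¹y⁻¹xy`. -/
def gcomm {G : Type*} [Group G] (x y : G) : G := x⁻¹ * y⁻¹ * x * y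

/-- The free generators `a`, `b` of the free group on two generators. -/
def aF : FreeGroup Bool := FreeGroup.of true
def bF : FreeGroup Bool := FreeGroup.of false

/-- Relators of `G = ⟨a,b ∣ [a,b]^{p^γ} = a^{p^α} = [a,b,b] = [a,b,a] = 1,
b^{p^β} = [a,b]^{p^σ}⟩`. -/
def rels6 (p α β γ σ : ℕ) : Set (FreeGroup Bool) :=
  {gcomm aF bF ^ p ^ γ, aF ^ p ^ α, gcomm (gcomm aF bF) bF, gcomm (gcomm aF bF) aF,
    bF ^ p ^ β * (gcomm aF bF ^ p ^ σ)⁻¹}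

/-- Relators of `H = ⟨x,y ∣ x^{p^β} = y^{p^β} = [x,y]^{p^σ} = [x,y,x] = [x,y,y] = 1⟩`. -/
def rels6' (p β σ : ℕ) : Set (FreeGroup Bool) :=
  {aF ^ p ^ β, bF ^ p ^ β, gcomm aF bF ^ p ^ σ, gcomm (gcomm aF bF) aF,
    gcomm (gcomm aF bF) bF}

lemma mk_rel_eq_one {rels : Set (FreeGroup Bool)} {r : FreeGroup Bool} (hr : r ∈ rels) :
    PresentedGroup.mk rels r = 1 :=
  (QuotientGroup.eq_one_iff r).2 (Subgroup.subset_normalClosure hr)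

lemma map_gcomm {G H : Type*} [Group G] [Group H] (f : G →* H) (x y : G) :
    f (gcomm x y) = gcomm (f x) (f y) := by
  simp [gcomm]

lemma commute_of_gcomm_eq_one {G : Type*} [Group G] {x y : G} (h : gcomm x y = 1) :
    Commute x y := by
  have h' : x⁻¹ * y⁻¹ * x * y = 1 := h
  have : x * y = y * x := by
    calc x * y = y * x * (x⁻¹ * y⁻¹ * x * y) := by group
      _ = y * x := by rw [h']; group
  exact this

/-- `G/M ≅ H`, expressed as: there is a surjective homomorphism `G → H` with kernel
`M = ⟨a^{p^β}, b^{p^β}⟩`. -/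
theorem stmt6 (p α β γ σ : ℕ) (hp : p.Prime) (h1 : β < α) (h2 : γ ≤ β) (h3 : σ < γ)
    (h4 : α - β = γ - σ) :
    ∃ φ : PresentedGroup (rels6 p α β γ σ) →* PresentedGroup (rels6' p β σ),
      Function.Surjective φ ∧
        φ.ker = Subgroup.closure
          {(PresentedGroup.of true : PresentedGroup (rels6 p α β γ σ)) ^ p ^ β,
            (PresentedGroup.of false : PresentedGroup (rels6 p α β γ σ)) ^ p ^ β} := by
  classical
  set R := rels6 p α β γ σ with hR
  set R' := rels6' p β σ with hR'
  -- notation in H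
  set A' : PresentedGroup R' := PresentedGroup.of true with hA'
  set B' : PresentedGroup R' := PresentedGroup.of false with hB'
  -- lift of `of` is `mk`
  have liftof' : FreeGroup.lift (fun t : Bool => (PresentedGroup.of t : PresentedGroup R'))
      = PresentedGroup.mk R' := by
    ext t
    rfl
  -- relator facts in H
  have hA'β : A' ^ p ^ β = 1 := by
    have := mk_rel_eq_one (rels := R') (r := aF ^ p ^ β) (by simp [hR', rels6'])
    simpa [aF, map_pow, hA', PresentedGroup.of] using this
  have hB'β : B' ^ p ^ β = 1 := by
    have := mk_rel_eq_one (rels := R') (r := bF ^ p ^ β) (by simp [hR', rels6'])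
    simpa [bF, map_pow, hB', PresentedGroup.of] using this
  have hC'σ : gcomm A' B' ^ p ^ σ = 1 := by
    have := mk_rel_eq_one (rels := R') (r := gcomm aF bF ^ p ^ σ) (by simp [hR', rels6'])
    simpa [aF, bF, map_pow, map_gcomm, hA', hB', PresentedGroup.of] using this
  have hC'A' : gcomm (gcomm A' B') A' = 1 := by
    have := mk_rel_eq_one (rels := R') (r := gcomm (gcomm aF bF) aF) (by simp [hR', rels6'])
    simpa [aF, bF, map_gcomm, hA', hB', PresentedGroup.of] using this
  have hC'B' : gcomm (gcomm A' B') B' = 1 := by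
    have := mk_rel_eq_one (rels := R') (r := gcomm (gcomm aF bF) bF) (by simp [hR', rels6'])
    simpa [aF, bF, map_gcomm, hA', hB', PresentedGroup.of] using this
  -- the forward homomorphism
  have hrels : ∀ r ∈ R, FreeGroup.lift
      (fun t : Bool => (PresentedGroup.of t : PresentedGroup R')) r = 1 := by
    intro r hr
    rw [liftof']
    rcases hr with h | h | h | h | h
    · subst h
      have : (p : ℕ) ^ γ = p ^ σ * p ^ (γ - σ) := by
        rw [← pow_add, Nat.add_sub_cancel' h3.le]
      rw [map_pow, map_gcomm, this, pow_mul]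
      change (gcomm A' B' ^ p ^ σ) ^ p ^ (γ - σ) = 1
      rw [hC'σ, one_pow]
    · subst h
      have : (p : ℕ) ^ α = p ^ β * p ^ (α - β) := by
        rw [← pow_add, Nat.add_sub_cancel' h1.le]
      rw [map_pow, this, pow_mul]
      change (A' ^ p ^ β) ^ p ^ (α - β) = 1
      rw [hA'β, one_pow]
    · subst h
      rw [map_gcomm, map_gcomm]
      exact hC'B'
    · subst h
      rw [map_gcomm, map_gcomm]
      exact hC'A'
    · subst h
      rw [map_mul, map_inv, map_pow, map_pow, map_gcomm]
      change B' ^ p ^ β * (gcomm A' B' ^ p ^ σ)⁻¹ = 1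
      rw [hB'β, hC'σ]
      simp
  refine ⟨PresentedGroup.toGroup hrels, ?_, ?_⟩
  · -- surjectivity
    intro x
    have hx : x ∈ (PresentedGroup.toGroup hrels).range := by
      have : Subgroup.closure (Set.range (PresentedGroup.of : Bool → PresentedGroup R'))
          ≤ (PresentedGroup.toGroup hrels).range := by
        rw [Subgroup.closure_le]
        rintro _ ⟨t, rfl⟩
        exact ⟨PresentedGroup.of t, PresentedGroup.toGroup.of hrels⟩
      apply this
      rw [PresentedGroup.closure_range_of]
      trivial
    exact hx
  · -- kernel computation
    set A : PresentedGroup R := PresentedGroup.of true with hA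
    set B : PresentedGroup R := PresentedGroup.of false with hB
    set C : PresentedGroup R := gcomm A B with hC
    set K : Subgroup (PresentedGroup R) := Subgroup.closure {A ^ p ^ β, B ^ p ^ β} with hK
    -- relator facts in G
    have hCγ : C ^ p ^ γ = 1 := by
      have := mk_rel_eq_one (rels := R) (r := gcomm aF bF ^ p ^ γ) (by simp [hR, rels6])
      simpa [aF, bF, map_pow, map_gcomm, hC, hA, hB, PresentedGroup.of] using this
    have hAα : A ^ p ^ α = 1 := by
      have := mk_rel_eq_one (rels := R) (r := aF ^ p ^ α) (by simp [hR, rels6])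
      simpa [aF, map_pow, hA, PresentedGroup.of] using this
    have hCB : gcomm C B = 1 := by
      have := mk_rel_eq_one (rels := R) (r := gcomm (gcomm aF bF) bF) (by simp [hR, rels6])
      simpa [aF, bF, map_gcomm, hC, hA, hB, PresentedGroup.of] using this
    have hCA : gcomm C A = 1 := by
      have := mk_rel_eq_one (rels := R) (r := gcomm (gcomm aF bF) aF) (by simp [hR, rels6])
      simpa [aF, bF, map_gcomm, hC, hA, hB, PresentedGroup.of] using this
    have hBσ : B ^ p ^ β = C ^ p ^ σ := by
      have := mk_rel_eq_one (rels := R) (r := bF ^ p ^ β * (gcomm aF bF ^ p ^ σ)⁻¹)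
        (by simp [hR, rels6])
      have h' : B ^ p ^ β * (C ^ p ^ σ)⁻¹ = 1 := by
        simpa [aF, bF, map_pow, map_gcomm, hC, hA, hB, PresentedGroup.of] using this
      rw [mul_inv_eq_one] at h'
      exact h'
    have commCA : Commute C A := commute_of_gcomm_eq_one hCA
    have commCB : Commute C B := commute_of_gcomm_eq_one hCB
    have hCβ : C ^ p ^ β = 1 := by
      have : (p : ℕ) ^ β = p ^ γ * p ^ (β - γ) := by
        rw [← pow_add, Nat.add_sub_cancel' h2]
      rw [this, pow_mul, hCγ, one_pow]
    -- A^{p^β} is central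
    have hconj : ∀ n : ℕ, B⁻¹ * A ^ n * B = A ^ n * C ^ n := by
      intro n
      have h1' : B⁻¹ * A * B = A * C := by
        rw [hC, gcomm]; group
      calc B⁻¹ * A ^ n * B = (B⁻¹ * A * B⁻¹⁻¹) ^ n := by rw [conj_pow]; group
        _ = (A * C) ^ n := by rw [inv_inv, h1']
        _ = A ^ n * C ^ n := (commCA.symm).mul_pow n
    have hcentral : ∀ z : PresentedGroup R, (Commute z A ∧ Commute z B) →
        ∀ g : PresentedGroup R, g * z = z * g := by
      intro z hz g
      have : g ∈ Subgroup.centralizer {z} := by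
        refine PresentedGroup.generated_by R (Subgroup.centralizer {z}) ?_ g
        intro j
        rw [Subgroup.mem_centralizer_iff]
        rintro h rfl
        cases j
        · exact hz.2.eq
        · exact hz.1.eq
      have := Subgroup.mem_centralizer_iff.1 this z rfl
      exact this.symm
    have hAcentral : ∀ g : PresentedGroup R, g * A ^ p ^ β = A ^ p ^ β * g := by
      refine hcentral _ ⟨Commute.pow_left (Commute.refl A) _, ?_⟩
      have : B⁻¹ * A ^ p ^ β * B = A ^ p ^ β := by rw [hconj, hCβ, mul_one]
      have h' : A ^ p ^ β * B = B * A ^ p ^ β := by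
        conv_rhs => rw [← this]
        group
      exact h'
    have hBcentral : ∀ g : PresentedGroup R, g * B ^ p ^ β = B ^ p ^ β * g := by
      refine hcentral _ ⟨?_, ?_⟩
      · rw [hBσ]; exact (commCA.pow_left _)
      · rw [hBσ]; exact (commCB.pow_left _)
    -- K is normal
    have hKnormal : K.Normal := by
      constructor
      intro n hn g
      have hcen : ∀ x ∈ K, ∀ g : PresentedGroup R, g * x = x * g := by
        intro x hx
        refine Subgroup.closure_induction ?_ ?_ ?_ ?_ hx
        · rintro y (rfl | rfl)
          · exact hAcentral
          · intro g; exact hBcentral g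
        · intro g; simp
        · intro x y _ _ hx hy g
          rw [← mul_assoc, hx, mul_assoc, hy, mul_assoc]
        · intro x _ hx g
          have := hx g⁻¹
          calc g * x⁻¹ = (x * g⁻¹)⁻¹ * (x⁻¹ * x) := by group
            _ = (g⁻¹ * x)⁻¹ * (x⁻¹ * x) := by rw [← this]
            _ = x⁻¹ * g := by group
      have : g * n * g⁻¹ = n := by
        rw [hcen n hn g]
        group
      rw [this]
      exact hn
    -- the reverse homomorphism
    have hrels' : ∀ r ∈ R', FreeGroup.lift
        (fun t : Bool => ((QuotientGroup.mk' K) (PresentedGroup.of t))) r = 1 := by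
      have liftcomp : FreeGroup.lift
          (fun t : Bool => ((QuotientGroup.mk' K) (PresentedGroup.of t)))
          = (QuotientGroup.mk' K).comp (PresentedGroup.mk R) := by
        ext t
        rfl
      intro r hr
      rw [liftcomp]
      have memK : ∀ x : PresentedGroup R, x ∈ K → (QuotientGroup.mk' K) x = 1 := by
        intro x hx
        rwa [← MonoidHom.mem_ker, QuotientGroup.ker_mk']
      rcases hr with h | h | h | h | h
      · subst h
        show (QuotientGroup.mk' K) (PresentedGroup.mk R (aF ^ p ^ β)) = 1
        apply memK
        rw [map_pow]
        exact Subgroup.subset_closure (Or.inl rfl)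
      · subst h
        show (QuotientGroup.mk' K) (PresentedGroup.mk R (bF ^ p ^ β)) = 1
        apply memK
        rw [map_pow]
        exact Subgroup.subset_closure (Or.inr rfl)
      · subst h
        show (QuotientGroup.mk' K) (PresentedGroup.mk R (gcomm aF bF ^ p ^ σ)) = 1
        apply memK
        rw [map_pow, map_gcomm]
        change C ^ p ^ σ ∈ K
        rw [← hBσ]
        exact Subgroup.subset_closure (Or.inr rfl)
      · subst h
        show (QuotientGroup.mk' K) (PresentedGroup.mk R (gcomm (gcomm aF bF) aF)) = 1
        rw [map_gcomm, map_gcomm]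
        change (QuotientGroup.mk' K) (gcomm C A) = 1
        rw [hCA, map_one]
      · subst h
        show (QuotientGroup.mk' K) (PresentedGroup.mk R (gcomm (gcomm aF bF) bF)) = 1
        rw [map_gcomm, map_gcomm]
        change (QuotientGroup.mk' K) (gcomm C B) = 1
        rw [hCB, map_one]
    set ψ := PresentedGroup.toGroup hrels' with hψ
    have hcompat : ψ.comp (PresentedGroup.toGroup hrels) = QuotientGroup.mk' K := by
      apply PresentedGroup.ext
      intro t
      rw [MonoidHom.comp_apply, PresentedGroup.toGroup.of, PresentedGroup.toGroup.of]
    -- conclude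
    apply le_antisymm
    · intro x hx
      have h1' : ψ ((PresentedGroup.toGroup hrels) x) = 1 := by
        rw [MonoidHom.mem_ker.1 hx, map_one]
      have h2' : (QuotientGroup.mk' K) x = 1 := by
        have h3' : (ψ.comp (PresentedGroup.toGroup hrels)) x = 1 := h1'
        rwa [hcompat] at h3'
      rwa [← QuotientGroup.ker_mk' K, MonoidHom.mem_ker]
    · rw [Subgroup.closure_le]
      rintro x (rfl | rfl)
      · rw [SetLike.mem_coe, MonoidHom.mem_ker, map_pow]
        rw [show (PresentedGroup.toGroup hrels) (PresentedGroup.of true) = A' from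
          PresentedGroup.toGroup.of hrels]
        exact hA'β
      · rw [SetLike.mem_coe, MonoidHom.mem_ker, map_pow]
        rw [show (PresentedGroup.toGroup hrels) (PresentedGroup.of false) = B' from
          PresentedGroup.toGroup.of hrels]
        exact hB'β
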